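/- Let n ≥ 1 and let x, y ∈ Bⁿ be such that c_{Bⁿ}(x,y) < 2. Then j_{Bⁿ}(x,y) ≤ 4·artanh(c_{Bⁿ}(x,y)/2), where artanh is the inverse hyperbolic tangent. -/

import Mathlib

open Metric Set Real

/-- The triangular ratio metric of `G`. -/
noncomputable def sMet {E : Type*} [MetricSpace E] (G : Set E) (x y : E) : ℝ :=
  sSup ((fun z => dist x y / (dist x z + dist z y)) '' frontier G)

/-- The Cassinian metric of `G`. -/
noncomputable def cMet {E : Type*} [MetricSpace E] (G : Set E) (x y : E) : ℝ :=
  sSup ((fun z => dist x y / (dist x z * dist z y)) '' frontier G)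

/-- The distance ratio metric of `G`. -/
noncomputable def jMet {E : Type*} [MetricSpace E] (G : Set E) (x y : E) : ℝ :=
  Real.log (1 + dist x y / min (infDist x (frontier G)) (infDist y (frontier G)))
/-- The inverse hyperbolic tangent, `artanh t = (1/2)·log((1+t)/(1−t))`. -/
noncomputable def artanh (t : ℝ) : ℝ := (1 / 2) * Real.log ((1 + t) / (1 - t))

/-!
If `d(x) ≤ d(y)` and `z ∈ ∂Bⁿ` is a point nearest to `x`, then `|z - y| ≤ 2`, so
`|x - y| / d(x) ≤ 2 |x - y| / (|x - z| |z - y|) ≤ 2 c`. Hence `j ≤ log (1 + 2c)`, and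
`1 + 2c ≤ ((2 + c) / (2 - c))²` for `0 ≤ c < 2` turns this into `j ≤ 4 artanh (c / 2)`.
-/

section Cassinian

variable {E : Type*} [MetricSpace E] {G : Set E} {x y : E}

lemma cMet_nonneg : 0 ≤ cMet G x y :=
  Real.sSup_nonneg <| by
    rintro _ ⟨z, -, rfl⟩
    positivity

lemma cMet_comm : cMet G x y = cMet G y x := by
  unfold cMet
  congr
  funext z
  rw [dist_comm x y, mul_comm, dist_comm z x, dist_comm y z]

lemma IsOpen.infDist_frontier_pos (hG : IsOpen G) (hne : (frontier G).Nonempty) (hx : x ∈ G) :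
    0 < infDist x (frontier G) :=
  (isClosed_frontier.notMem_iff_infDist_pos hne).1 fun h => h.2 (by rwa [hG.interior_eq])

lemma div_dist_mul_dist_le_cMet (hx : 0 < infDist x (frontier G))
    (hy : 0 < infDist y (frontier G)) {z : E} (hz : z ∈ frontier G) :
    dist x y / (dist x z * dist z y) ≤ cMet G x y := by
  refine le_csSup ⟨dist x y / (infDist x (frontier G) * infDist y (frontier G)), ?_⟩
    ⟨z, hz, rfl⟩
  rintro _ ⟨w, hw, rfl⟩
  exact div_le_div_of_nonneg_left dist_nonneg (mul_pos hx hy) <|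
    mul_le_mul (infDist_le_dist_of_mem hw) (dist_comm w y ▸ infDist_le_dist_of_mem hw) hy.le
      dist_nonneg

lemma dist_div_infDist_le_mul_cMet [ProperSpace E] {D : ℝ} (hx : 0 < infDist x (frontier G))
    (hy : 0 < infDist y (frontier G)) (hD : ∀ z ∈ frontier G, dist z y ≤ D) :
    dist x y / infDist x (frontier G) ≤ D * cMet G x y := by
  have hne : (frontier G).Nonempty := nonempty_iff_ne_empty.2 fun h => by
    simp [h] at hx
  obtain ⟨z, hz, hxz⟩ := isClosed_frontier.exists_infDist_eq_dist hne x
  have hzy : 0 < dist z y := hy.trans_le (dist_comm y z ▸ infDist_le_dist_of_mem hz)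
  have hD0 : 0 < D := hzy.trans_le (hD z hz)
  calc dist x y / infDist x (frontier G) = D * (dist x y / (dist x z * D)) := by
        rw [hxz]; field_simp
    _ ≤ D * (dist x y / (dist x z * dist z y)) := by
        gcongr
        · rw [← hxz]; positivity
        · exact hD z hz
    _ ≤ D * cMet G x y := by gcongr; exact div_dist_mul_dist_le_cMet hx hy hz

lemma jMet_le_log_one_add_mul_cMet [ProperSpace E] {D : ℝ} (hx : 0 < infDist x (frontier G))
    (hy : 0 < infDist y (frontier G)) (hDx : ∀ z ∈ frontier G, dist z x ≤ D)
    (hDy : ∀ z ∈ frontier G, dist z y ≤ D) :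
    jMet G x y ≤ Real.log (1 + D * cMet G x y) := by
  refine Real.log_le_log (by positivity) (add_le_add_right ?_ 1)
  rcases min_choice (infDist x (frontier G)) (infDist y (frontier G)) with h | h <;> rw [h]
  · exact dist_div_infDist_le_mul_cMet hx hy hDy
  · rw [dist_comm, cMet_comm]
    exact dist_div_infDist_le_mul_cMet hy hx hDx

end Cassinian

lemma log_one_add_two_mul_le_four_artanh {c : ℝ} (h0 : 0 ≤ c) (h2 : c < 2) :
    Real.log (1 + 2 * c) ≤ 4 * _root_.artanh (c / 2) := by
  have hsq : 1 + 2 * c ≤ ((2 + c) / (2 - c)) ^ 2 := by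
    rw [div_pow, le_div_iff₀ (by positivity)]
    nlinarith [mul_nonneg (mul_nonneg h0 h0) (by linarith : (0 : ℝ) ≤ 4 - c)]
  calc Real.log (1 + 2 * c) ≤ Real.log (((2 + c) / (2 - c)) ^ 2) :=
        Real.log_le_log (by positivity) hsq
    _ = 2 * Real.log ((2 + c) / (2 - c)) := by rw [Real.log_pow]; norm_num
    _ = 4 * _root_.artanh (c / 2) := by
        rw [_root_.artanh, show (1 + c / 2) / (1 - c / 2) = (2 + c) / (2 - c) by field_simp]
        ring

/-- for `x, y ∈ Bⁿ` with `c_{Bⁿ}(x,y) < 2`,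
`j_{Bⁿ}(x,y) ≤ 4·artanh(c_{Bⁿ}(x,y)/2)`. -/
theorem jMet_le_four_artanh (n : ℕ) (hn : 1 ≤ n) (x y : EuclideanSpace ℝ (Fin n))
    (hx : x ∈ Metric.ball (0 : EuclideanSpace ℝ (Fin n)) 1)
    (hy : y ∈ Metric.ball (0 : EuclideanSpace ℝ (Fin n)) 1)
    (hc : cMet (Metric.ball (0 : EuclideanSpace ℝ (Fin n)) 1) x y < 2) :
    jMet (Metric.ball (0 : EuclideanSpace ℝ (Fin n)) 1) x y ≤
      4 * _root_.artanh (cMet (Metric.ball (0 : EuclideanSpace ℝ (Fin n)) 1) x y / 2) := by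
  have : Nonempty (Fin n) := ⟨⟨0, hn⟩⟩
  have hne : (frontier (ball (0 : EuclideanSpace ℝ (Fin n)) 1)).Nonempty := by
    rw [frontier_ball 0 one_ne_zero]
    exact NormedSpace.sphere_nonempty.2 zero_le_one
  have hdist : ∀ w ∈ ball (0 : EuclideanSpace ℝ (Fin n)) 1,
      ∀ z ∈ frontier (ball (0 : EuclideanSpace ℝ (Fin n)) 1), dist z w ≤ 2 := fun w hw z hz =>
    calc dist z w ≤ diam (closedBall (0 : EuclideanSpace ℝ (Fin n)) 1) :=
          dist_le_diam_of_mem isBounded_closedBall (sphere_subset_closedBall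
            (frontier_ball_subset_sphere hz)) (ball_subset_closedBall hw)
      _ ≤ 2 := by simpa using diam_closedBall (x := (0 : EuclideanSpace ℝ (Fin n))) zero_le_one
  calc _ ≤ Real.log (1 + 2 * cMet (ball (0 : EuclideanSpace ℝ (Fin n)) 1) x y) :=
        jMet_le_log_one_add_mul_cMet (isOpen_ball.infDist_frontier_pos hne hx)
          (isOpen_ball.infDist_frontier_pos hne hy) (hdist x hx) (hdist y hy)
    _ ≤ _ := log_one_add_two_mul_le_four_artanh cMet_nonneg hc
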